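/- arXiv:1804.09161 — 3 statements merged into one kernel-verified Lean document; each statement's English description precedes it below -/
import Mathlib

section
/- Under the same setting and finiteness assumptions, I(J,ρ) - I(-J,ρ) = ∫₀ᵀ J'(t)·log( ρ₊(t)(1-ρ₋(t)) / (ρ₋(t)(1-ρ₊(t))) ) dt, where (-J) denotes replacing J' by -J'. In particular the difference I(J,ρ) - I(-J,ρ) does not depend on ρ. -/
open MeasureTheory Set

/-!
Pointwise, `(J' + ∂ᵧρ)² - (-J' + ∂ᵧρ)² = 4 J' ∂ᵧρ`, so for each time the difference of the two
`y`-integrals is `4 J'` times `∫ ∂ᵧρ / (ρ (1 - ρ)) dy`. The integrand is the `y`-derivative of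
`logit ρ`, so this integral only sees the boundary values `ρ±`.
-/

noncomputable def logit (u : ℝ) : ℝ := Real.log u - Real.log (1 - u)

theorem HasDerivAt.logit {f : ℝ → ℝ} {f' x : ℝ} (hf : HasDerivAt f f' x)
    (hx : f x ∈ Ioo (0 : ℝ) 1) :
    HasDerivAt (fun y => logit (f y)) (f' / (f x * (1 - f x))) x := by
  obtain ⟨h0, h1⟩ := hx
  have h0' : f x ≠ 0 := h0.ne'
  have h1' : 1 - f x ≠ 0 := by linarith
  refine ((hf.log h0').sub (((hasDerivAt_const x 1).sub hf).log h1')).congr_deriv ?_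
  simp only [Pi.sub_apply]
  field_simp
  ring

theorem logit_sub_logit {p m : ℝ} (hp : p ∈ Ioo (0 : ℝ) 1) (hm : m ∈ Ioo (0 : ℝ) 1) :
    logit p - logit m = Real.log (p * (1 - m) / (m * (1 - p))) := by
  have hp' : 1 - p ≠ 0 := by linarith [hp.2]
  have hm' : 1 - m ≠ 0 := by linarith [hm.2]
  rw [Real.log_div (mul_ne_zero hp.1.ne' hm') (mul_ne_zero hm.1.ne' hp'),
    Real.log_mul hp.1.ne' hm', Real.log_mul hm.1.ne' hp', logit, logit]
  ring

theorem integral_div_mul_one_sub_eq_logit_sub {f f' : ℝ → ℝ} {a b : ℝ} (hab : a ≤ b)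
    (hf : ∀ y ∈ Icc a b, f y ∈ Ioo (0 : ℝ) 1) (hd : ∀ y ∈ Icc a b, HasDerivAt f (f' y) y)
    (hint : IntegrableOn (fun y => f' y / (f y * (1 - f y))) (Icc a b)) :
    ∫ y in Icc a b, f' y / (f y * (1 - f y)) = logit (f b) - logit (f a) := by
  rw [integral_Icc_eq_integral_Ioc, ← intervalIntegral.integral_of_le hab]
  rw [← uIcc_of_le hab] at hf hd hint
  exact intervalIntegral.integral_eq_sub_of_hasDerivAt (fun y hy => (hd y hy).logit (hf y hy))
    hint.intervalIntegrable

theorem integral_sq_add_div_sub_integral_sq_neg_add_div {f f' : ℝ → ℝ} {a b j : ℝ}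
    (hab : a ≤ b) (hf : ∀ y ∈ Icc a b, f y ∈ Ioo (0 : ℝ) 1)
    (hd : ∀ y ∈ Icc a b, HasDerivAt f (f' y) y)
    (hi : IntegrableOn (fun y => (j + f' y) ^ 2 / (f y * (1 - f y))) (Icc a b))
    (hi' : IntegrableOn (fun y => (-j + f' y) ^ 2 / (f y * (1 - f y))) (Icc a b)) :
    (∫ y in Icc a b, (j + f' y) ^ 2 / (f y * (1 - f y)))
      - (∫ y in Icc a b, (-j + f' y) ^ 2 / (f y * (1 - f y)))
      = 4 * j * Real.log (f b * (1 - f a) / (f a * (1 - f b))) := by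
  rcases eq_or_ne j 0 with rfl | hj
  · simp
  have hdiff : (fun y => (j + f' y) ^ 2 / (f y * (1 - f y)) - (-j + f' y) ^ 2 / (f y * (1 - f y)))
      = fun y => 4 * j * (f' y / (f y * (1 - f y))) := by
    ext y
    ring
  have hint : IntegrableOn (fun y => f' y / (f y * (1 - f y))) (Icc a b) := by
    have h : IntegrableOn (fun y => 4 * j * (f' y / (f y * (1 - f y)))) (Icc a b) := by
      rw [← hdiff]
      exact hi.sub hi'
    exact (integrable_const_mul_iff (by simpa using hj) _).1 h
  rw [← integral_sub hi hi', hdiff, integral_const_mul,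
    integral_div_mul_one_sub_eq_logit_sub hab hf hd hint,
    logit_sub_logit (hf b (right_mem_Icc.2 hab)) (hf a (left_mem_Icc.2 hab))]

theorem stmt3_general (T : ℝ) (ρ ρy : ℝ → ℝ → ℝ) (J' ρp ρm : ℝ → ℝ)
    (hρ : ∀ t ∈ Icc 0 T, ∀ y ∈ Icc (-1:ℝ) 1, ρ t y ∈ Ioo (0:ℝ) 1)
    (hd : ∀ t ∈ Icc 0 T, ∀ y ∈ Icc (-1:ℝ) 1, HasDerivAt (ρ t) (ρy t y) y)
    (hbm : ∀ t ∈ Icc 0 T, ρ t (-1) = ρm t) (hbp : ∀ t ∈ Icc 0 T, ρ t 1 = ρp t)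
    (hi1 : ∀ t ∈ Icc 0 T, IntegrableOn
      (fun y => (J' t + ρy t y)^2 / (ρ t y * (1 - ρ t y))) (Icc (-1:ℝ) 1))
    (hi1' : ∀ t ∈ Icc 0 T, IntegrableOn
      (fun y => (-J' t + ρy t y)^2 / (ρ t y * (1 - ρ t y))) (Icc (-1:ℝ) 1))
    (ho1 : IntegrableOn
      (fun t => ∫ y in Icc (-1:ℝ) 1, (J' t + ρy t y)^2 / (ρ t y * (1 - ρ t y))) (Icc 0 T))
    (ho1' : IntegrableOn
      (fun t => ∫ y in Icc (-1:ℝ) 1, (-J' t + ρy t y)^2 / (ρ t y * (1 - ρ t y))) (Icc 0 T)) :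
    (1/4) * (∫ t in Icc 0 T, ∫ y in Icc (-1:ℝ) 1, (J' t + ρy t y)^2 / (ρ t y * (1 - ρ t y)))
      - (1/4) * (∫ t in Icc 0 T, ∫ y in Icc (-1:ℝ) 1, (-J' t + ρy t y)^2 / (ρ t y * (1 - ρ t y)))
      = ∫ t in Icc 0 T, J' t * Real.log (ρp t * (1 - ρm t) / (ρm t * (1 - ρp t))) := by
  have hslice : ∀ t ∈ Icc 0 T,
      (∫ y in Icc (-1:ℝ) 1, (J' t + ρy t y)^2 / (ρ t y * (1 - ρ t y)))
        - (∫ y in Icc (-1:ℝ) 1, (-J' t + ρy t y)^2 / (ρ t y * (1 - ρ t y)))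
      = 4 * (J' t * Real.log (ρp t * (1 - ρm t) / (ρm t * (1 - ρp t)))) := by
    intro t ht
    rw [← hbm t ht, ← hbp t ht, ← mul_assoc]
    exact integral_sq_add_div_sub_integral_sq_neg_add_div (by norm_num) (hρ t ht) (hd t ht)
      (hi1 t ht) (hi1' t ht)
  rw [← mul_sub, ← integral_sub ho1 ho1', setIntegral_congr_fun measurableSet_Icc hslice,
    integral_const_mul]
  ring

/-- Gallavotti–Cohen type fluctuation relation for the quasi-static rate function:
`I(J,ρ) - I(-J,ρ) = ∫₀ᵀ J'(t) log(ρ₊(t)(1-ρ₋(t))/(ρ₋(t)(1-ρ₊(t)))) dt`;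
in particular the difference does not depend on `ρ`. -/
theorem stmt3 (T : ℝ) (hT : 0 < T) (ρ ρy : ℝ → ℝ → ℝ) (J' ρp ρm : ℝ → ℝ)
    (hρ : ∀ t ∈ Icc 0 T, ∀ y ∈ Icc (-1:ℝ) 1, ρ t y ∈ Ioo (0:ℝ) 1)
    (hbpm : ∀ t ∈ Icc 0 T, ρp t ∈ Ioo (0:ℝ) 1 ∧ ρm t ∈ Ioo (0:ℝ) 1)
    (hd : ∀ t ∈ Icc 0 T, ∀ y ∈ Icc (-1:ℝ) 1, HasDerivAt (ρ t) (ρy t y) y)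
    (hbm : ∀ t ∈ Icc 0 T, ρ t (-1) = ρm t) (hbp : ∀ t ∈ Icc 0 T, ρ t 1 = ρp t)
    (hi1 : ∀ t ∈ Icc 0 T, IntegrableOn
      (fun y => (J' t + ρy t y)^2 / (ρ t y * (1 - ρ t y))) (Icc (-1:ℝ) 1))
    (hi1' : ∀ t ∈ Icc 0 T, IntegrableOn
      (fun y => (-J' t + ρy t y)^2 / (ρ t y * (1 - ρ t y))) (Icc (-1:ℝ) 1))
    (ho1 : IntegrableOn
      (fun t => ∫ y in Icc (-1:ℝ) 1, (J' t + ρy t y)^2 / (ρ t y * (1 - ρ t y))) (Icc 0 T))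
    (ho1' : IntegrableOn
      (fun t => ∫ y in Icc (-1:ℝ) 1, (-J' t + ρy t y)^2 / (ρ t y * (1 - ρ t y))) (Icc 0 T))
    (ho3 : IntegrableOn
      (fun t => J' t * Real.log (ρp t * (1 - ρm t) / (ρm t * (1 - ρp t)))) (Icc 0 T)) :
    (1/4) * (∫ t in Icc 0 T, ∫ y in Icc (-1:ℝ) 1, (J' t + ρy t y)^2 / (ρ t y * (1 - ρ t y)))
      - (1/4) * (∫ t in Icc 0 T, ∫ y in Icc (-1:ℝ) 1, (-J' t + ρy t y)^2 / (ρ t y * (1 - ρ t y)))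
      = ∫ t in Icc 0 T, J' t * Real.log (ρp t * (1 - ρm t) / (ρm t * (1 - ρp t))) :=
  stmt3_general T ρ ρy J' ρp ρm hρ hd hbm hbp hi1 hi1' ho1 ho1'
end

section
/- Let ρ± : [0,T] → (0,1) and define the quasi-static profile ρ̄(t,y) = ((ρ₊(t)-ρ₋(t))/2)y + (ρ₊(t)+ρ₋(t))/2 and the quasi-static current J̄'(t) = -(ρ₊(t)-ρ₋(t))/2. Then I(J̄, ρ̄) = 0, and I(-J̄, ρ̄) = (1/2)∫₀ᵀ [𝓗(ρ₊(t),ρ₋(t)) + 𝓗(ρ₋(t),ρ₊(t))] dt, where 𝓗(ρ,ν) = ρ log(ρ/ν) + (1-ρ)log((1-ρ)/(1-ν)). -/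
open MeasureTheory Set

/-- Relative entropy between Bernoulli measures of parameters `ρ` and `ν`. -/
noncomputable def Hrel (ρ ν : ℝ) : ℝ :=
  ρ * Real.log (ρ / ν) + (1 - ρ) * Real.log ((1 - ρ) / (1 - ν))

lemma hasDerivAt_logit {u : ℝ} (hu : u ∈ Ioo (0 : ℝ) 1) :
    HasDerivAt logit (u * (1 - u))⁻¹ u := by
  obtain ⟨hu0, hu1⟩ := hu
  have hlog : HasDerivAt logit (u⁻¹ - (-1) / (1 - u)) u :=
    (Real.hasDerivAt_log hu0.ne').sub (((hasDerivAt_id' u).const_sub 1).log (by linarith))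
  convert hlog using 1
  have : 1 - u ≠ 0 := by linarith
  field_simp
  ring

lemma Hrel_add_Hrel_swap {p m : ℝ} (hp : p ∈ Ioo (0 : ℝ) 1) (hm : m ∈ Ioo (0 : ℝ) 1) :
    Hrel p m + Hrel m p = (p - m) * (logit p - logit m) := by
  obtain ⟨hp0, hp1⟩ := hp
  obtain ⟨hm0, hm1⟩ := hm
  have hp1' : 1 - p ≠ 0 := by linarith
  have hm1' : 1 - m ≠ 0 := by linarith
  simp only [Hrel, logit, Real.log_div hp0.ne' hm0.ne', Real.log_div hm0.ne' hp0.ne',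
    Real.log_div hp1' hm1', Real.log_div hm1' hp1']
  ring

lemma quasiStatic_mem_Ioo {p m y : ℝ} (hp : p ∈ Ioo (0 : ℝ) 1) (hm : m ∈ Ioo (0 : ℝ) 1)
    (hy : y ∈ Icc (-1 : ℝ) 1) :
    (p - m) / 2 * y + (p + m) / 2 ∈ Ioo (0 : ℝ) 1 := by
  obtain ⟨hy₁, hy₂⟩ := hy
  -- the profile is the convex combination `((1 + y)/2) p + ((1 - y)/2) m`
  have hcombo := convex_Ioo (0 : ℝ) 1 hp hm (by linarith : 0 ≤ (1 + y) / 2)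
    (by linarith : 0 ≤ (1 - y) / 2) (by ring)
  convert hcombo using 1
  simp only [smul_eq_mul]
  ring

lemma integral_quasiStatic {p m : ℝ} (hp : p ∈ Ioo (0 : ℝ) 1) (hm : m ∈ Ioo (0 : ℝ) 1) :
    ∫ y in Icc (-1 : ℝ) 1,
        (p - m) ^ 2 / (((p - m) / 2 * y + (p + m) / 2) * (1 - ((p - m) / 2 * y + (p + m) / 2)))
      = 2 * (Hrel p m + Hrel m p) := by
  set ρ : ℝ → ℝ := fun y => (p - m) / 2 * y + (p + m) / 2
  have hρ_one : ρ 1 = p := by simp only [ρ]; ring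
  have hρ_neg_one : ρ (-1) = m := by simp only [ρ]; ring
  have hρ_mem : ∀ y ∈ uIcc (-1 : ℝ) 1, ρ y ∈ Ioo (0 : ℝ) 1 := fun y hy =>
    quasiStatic_mem_Ioo hp hm (by rwa [uIcc_of_le (by norm_num)] at hy)
  have hderiv : ∀ y ∈ uIcc (-1 : ℝ) 1,
      HasDerivAt (fun y => 2 * (p - m) * logit (ρ y)) ((p - m) ^ 2 / (ρ y * (1 - ρ y))) y := by
    intro y hy
    have hρ' : HasDerivAt ρ ((p - m) / 2) y := by
      simpa only [mul_one] using
        ((hasDerivAt_id' y).const_mul ((p - m) / 2)).add_const ((p + m) / 2)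
    refine (((hasDerivAt_logit (hρ_mem y hy)).comp y hρ').const_mul (2 * (p - m))).congr_deriv ?_
    obtain ⟨h0, h1⟩ := hρ_mem y hy
    have : 1 - ρ y ≠ 0 := by linarith
    field_simp
  have hcont : ContinuousOn (fun y => (p - m) ^ 2 / (ρ y * (1 - ρ y))) (uIcc (-1 : ℝ) 1) := by
    refine continuousOn_const.div (by fun_prop) fun y hy => ?_
    obtain ⟨h0, h1⟩ := hρ_mem y hy
    exact mul_ne_zero h0.ne' (by linarith)
  rw [integral_Icc_eq_integral_Ioc, ← intervalIntegral.integral_of_le (by norm_num),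
    intervalIntegral.integral_eq_sub_of_hasDerivAt hderiv hcont.intervalIntegrable,
    Hrel_add_Hrel_swap hp hm, hρ_one, hρ_neg_one]
  ring

theorem stmt4_general (T : ℝ) (ρp ρm : ℝ → ℝ)
    (hb : ∀ t, ρp t ∈ Ioo (0:ℝ) 1 ∧ ρm t ∈ Ioo (0:ℝ) 1)
    (ρbar : ℝ → ℝ → ℝ)
    (hbar : ∀ t y, ρbar t y = ((ρp t - ρm t)/2) * y + (ρp t + ρm t)/2)
    (Jbar' : ℝ → ℝ) (hJ : ∀ t, Jbar' t = -(ρp t - ρm t)/2) :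
    ((1/4) * ∫ t in Icc 0 T, ∫ y in Icc (-1:ℝ) 1,
        (Jbar' t + (ρp t - ρm t)/2)^2 / (ρbar t y * (1 - ρbar t y)) = 0) ∧
    ((1/4) * ∫ t in Icc 0 T, ∫ y in Icc (-1:ℝ) 1,
        (-Jbar' t + (ρp t - ρm t)/2)^2 / (ρbar t y * (1 - ρbar t y))
      = (1/2) * ∫ t in Icc 0 T, (Hrel (ρp t) (ρm t) + Hrel (ρm t) (ρp t))) := by
  have hFick : ∀ t, Jbar' t + (ρp t - ρm t) / 2 = 0 := fun t => by rw [hJ]; ring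
  have hReversed : ∀ t, -Jbar' t + (ρp t - ρm t) / 2 = ρp t - ρm t := fun t => by rw [hJ]; ring
  constructor
  · simp [hFick]
  · simp only [hReversed, hbar, integral_quasiStatic (hb _).1 (hb _).2,
      integral_const_mul]
    ring

/-- For the quasi-static profile `ρ̄(t,y) = ((ρ₊-ρ₋)/2)y + (ρ₊+ρ₋)/2` and current
`J̄'(t) = -(ρ₊(t)-ρ₋(t))/2`, one has `I(J̄,ρ̄) = 0` and
`I(-J̄,ρ̄) = (1/2)∫₀ᵀ [𝓗(ρ₊,ρ₋) + 𝓗(ρ₋,ρ₊)] dt`: the cost of inverting Fick's law. -/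
theorem stmt4 (T : ℝ) (hT : 0 < T) (ρp ρm : ℝ → ℝ)
    (hcp : Continuous ρp) (hcm : Continuous ρm)
    (hb : ∀ t, ρp t ∈ Ioo (0:ℝ) 1 ∧ ρm t ∈ Ioo (0:ℝ) 1)
    (ρbar : ℝ → ℝ → ℝ)
    (hbar : ∀ t y, ρbar t y = ((ρp t - ρm t)/2) * y + (ρp t + ρm t)/2)
    (Jbar' : ℝ → ℝ) (hJ : ∀ t, Jbar' t = -(ρp t - ρm t)/2) :
    ((1/4) * ∫ t in Icc 0 T, ∫ y in Icc (-1:ℝ) 1,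
        (Jbar' t + (ρp t - ρm t)/2)^2 / (ρbar t y * (1 - ρbar t y)) = 0) ∧
    ((1/4) * ∫ t in Icc 0 T, ∫ y in Icc (-1:ℝ) 1,
        (-Jbar' t + (ρp t - ρm t)/2)^2 / (ρbar t y * (1 - ρbar t y))
      = (1/2) * ∫ t in Icc 0 T, (Hrel (ρp t) (ρm t) + Hrel (ρm t) (ρp t))) :=
  stmt4_general T ρp ρm hb ρbar hbar Jbar' hJ
end

section
/- For ε > 0, let R_ε^D and R_ε^N denote the resolvent kernels (I - εΔ_D)^{-1}(x,y) and (I - εΔ_N)^{-1}(x,y) of the Laplacian on [-1,1] with Dirichlet and Neumann boundary conditions respectively. Then ∂_x R_ε^D(x,y) = -∂_y R_ε^N(x,y) for x, y in the open interval (-1,1); consequently, for weakly differentiable ρ, ∂_x ∫₋₁¹ R_ε^D(x,y) ρ(y) dy = ∫₋₁¹ R_ε^N(x,y) ρ'(y) dy. -/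
open MeasureTheory Set

/-- Resolvent kernel of `(I - εΔ)⁻¹` on `[-1,1]` with Dirichlet boundary conditions. -/
noncomputable def RD (ε x y : ℝ) : ℝ :=
  Real.sinh ((1 + min x y) / Real.sqrt ε) * Real.sinh ((1 - max x y) / Real.sqrt ε) /
    (Real.sqrt ε * Real.sinh (2 / Real.sqrt ε))

/-- Resolvent kernel of `(I - εΔ)⁻¹` on `[-1,1]` with Neumann boundary conditions. -/
noncomputable def RN (ε x y : ℝ) : ℝ :=
  Real.cosh ((1 + min x y) / Real.sqrt ε) * Real.cosh ((1 - max x y) / Real.sqrt ε) /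
    (Real.sqrt ε * Real.sinh (2 / Real.sqrt ε))

/-- Auxiliary: split the kernel integral over `Icc (-1) 1` at the diagonal point. -/
lemma split_kernel (g h f : ℝ → ℝ) (C : ℝ) (hg : Continuous g) (hh : Continuous h)
    (hf : ContinuousOn f (Icc (-1) 1)) {x : ℝ} (hx : x ∈ Icc (-1:ℝ) 1) :
    ∫ y in Icc (-1:ℝ) 1, g (min x y) * h (max x y) / C * f y
      = (h x * ∫ y in (-1:ℝ)..x, g y * f y) / C
        + (g x * ∫ y in x..(1:ℝ), h y * f y) / C := by
  have hsub1 : uIcc (-1:ℝ) x ⊆ Icc (-1:ℝ) 1 := by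
    rw [uIcc_of_le hx.1]; exact Icc_subset_Icc le_rfl hx.2
  have hsub2 : uIcc x (1:ℝ) ⊆ Icc (-1:ℝ) 1 := by
    rw [uIcc_of_le hx.2]; exact Icc_subset_Icc hx.1 le_rfl
  have hker : Continuous fun y => g (min x y) * h (max x y) / C := by
    apply Continuous.div_const
    exact (hg.comp (continuous_const.min continuous_id)).mul
      (hh.comp (continuous_const.max continuous_id))
  have hi1 : IntervalIntegrable (fun y => g (min x y) * h (max x y) / C * f y)
      volume (-1) x :=
    (hker.continuousOn.mul (hf.mono hsub1)).intervalIntegrable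
  have hi2 : IntervalIntegrable (fun y => g (min x y) * h (max x y) / C * f y)
      volume x 1 :=
    (hker.continuousOn.mul (hf.mono hsub2)).intervalIntegrable
  rw [MeasureTheory.integral_Icc_eq_integral_Ioc,
    ← intervalIntegral.integral_of_le (by linarith [hx.1, hx.2] : (-1:ℝ) ≤ 1),
    ← intervalIntegral.integral_add_adjacent_intervals hi1 hi2]
  congr 1
  · rw [intervalIntegral.integral_congr
      (g := fun y => h x / C * (g y * f y)) ?_, intervalIntegral.integral_const_mul]
    · ring
    · intro y hy
      rw [uIcc_of_le hx.1] at hy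
      simp only [min_eq_right hy.2, max_eq_left hy.2]
      ring
  · rw [intervalIntegral.integral_congr
      (g := fun y => g x / C * (h y * f y)) ?_, intervalIntegral.integral_const_mul]
    · ring
    · intro y hy
      rw [uIcc_of_le hx.2] at hy
      simp only [min_eq_left hy.1, max_eq_right hy.1]
      ring

set_option maxHeartbeats 1000000 in
/-- Intertwining of the Dirichlet and Neumann resolvent kernels:
`∂_x R_ε^D(x,y) = -∂_y R_ε^N(x,y)` off the diagonal, and consequently, for a differentiable
profile `ρ` (vanishing at the boundary, as in the application to `ρ - ρ̄`),
`∂_x ∫ R_ε^D(x,y)ρ(y)dy = ∫ R_ε^N(x,y)ρ'(y)dy`. -/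
theorem stmt19 (ε : ℝ) (hε : 0 < ε) :
    (∀ x ∈ Ioo (-1:ℝ) 1, ∀ y ∈ Ioo (-1:ℝ) 1, x ≠ y →
      deriv (fun x' => RD ε x' y) x = - deriv (fun y' => RN ε x y') y) ∧
    (∀ ρ d : ℝ → ℝ, (∀ y ∈ Icc (-1:ℝ) 1, HasDerivAt ρ (d y) y) → Continuous d →
      ρ (-1) = 0 → ρ 1 = 0 →
      ∀ x ∈ Ioo (-1:ℝ) 1,
        HasDerivAt (fun x' => ∫ y in Icc (-1:ℝ) 1, RD ε x' y * ρ y)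
          (∫ y in Icc (-1:ℝ) 1, RN ε x y * d y) x) := by
  have hs : 0 < Real.sqrt ε := Real.sqrt_pos.mpr hε
  set s := Real.sqrt ε with hs_def
  have hsinh : 0 < Real.sinh (2 / s) := Real.sinh_pos_iff.mpr (by positivity)
  have hC : s * Real.sinh (2 / s) ≠ 0 := by positivity
  -- derivative facts for the four building blocks
  have hda : ∀ t : ℝ, HasDerivAt (fun u => Real.sinh ((1 + u) / s))
      (Real.cosh ((1 + t) / s) * (1 / s)) t := fun t => by
    have h1 : HasDerivAt (fun u : ℝ => (1 + u) / s) (1 / s) t := by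
      simpa using (((hasDerivAt_id t).const_add 1).div_const s)
    exact h1.sinh
  have hdb : ∀ t : ℝ, HasDerivAt (fun u => Real.sinh ((1 - u) / s))
      (Real.cosh ((1 - t) / s) * (-1 / s)) t := fun t => by
    have h1 : HasDerivAt (fun u : ℝ => (1 - u) / s) (-1 / s) t := by
      simpa using (((hasDerivAt_id t).const_sub 1).div_const s)
    exact h1.sinh
  have hdA : ∀ t : ℝ, HasDerivAt (fun u => Real.cosh ((1 + u) / s))
      (Real.sinh ((1 + t) / s) * (1 / s)) t := fun t => by
    have h1 : HasDerivAt (fun u : ℝ => (1 + u) / s) (1 / s) t := by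
      simpa using (((hasDerivAt_id t).const_add 1).div_const s)
    exact h1.cosh
  have hdB : ∀ t : ℝ, HasDerivAt (fun u => Real.cosh ((1 - u) / s))
      (Real.sinh ((1 - t) / s) * (-1 / s)) t := fun t => by
    have h1 : HasDerivAt (fun u : ℝ => (1 - u) / s) (-1 / s) t := by
      simpa using (((hasDerivAt_id t).const_sub 1).div_const s)
    exact h1.cosh
  constructor
  · -- pointwise identity
    intro x hx y hy hxy
    rcases hxy.lt_or_gt with hlt | hlt
    · -- x < y
      have hev1 : (fun x' => RD ε x' y) =ᶠ[nhds x]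
          (fun x' => Real.sinh ((1 + x') / s) * Real.sinh ((1 - y) / s)
            / (s * Real.sinh (2 / s))) := by
        filter_upwards [Iio_mem_nhds hlt] with z hz
        have hz' : z ≤ y := (mem_Iio.mp hz).le
        simp only [RD, ← hs_def, min_eq_left hz', max_eq_right hz']
      have hev2 : (fun y' => RN ε x y') =ᶠ[nhds y]
          (fun y' => Real.cosh ((1 + x) / s) * Real.cosh ((1 - y') / s)
            / (s * Real.sinh (2 / s))) := by
        filter_upwards [Ioi_mem_nhds hlt] with z hz
        have hz' : x ≤ z := (mem_Ioi.mp hz).le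
        simp only [RN, ← hs_def, min_eq_left hz', max_eq_right hz']
      rw [hev1.deriv_eq, hev2.deriv_eq]
      rw [(((hda x).mul_const _).div_const _).deriv,
        (((hdB y).const_mul _).div_const _).deriv]
      ring
    · -- y < x
      have hev1 : (fun x' => RD ε x' y) =ᶠ[nhds x]
          (fun x' => Real.sinh ((1 + y) / s) * Real.sinh ((1 - x') / s)
            / (s * Real.sinh (2 / s))) := by
        filter_upwards [Ioi_mem_nhds hlt] with z hz
        have hz' : y ≤ z := (mem_Ioi.mp hz).le
        simp only [RD, ← hs_def, min_eq_right hz', max_eq_left hz']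
      have hev2 : (fun y' => RN ε x y') =ᶠ[nhds y]
          (fun y' => Real.cosh ((1 + y') / s) * Real.cosh ((1 - x) / s)
            / (s * Real.sinh (2 / s))) := by
        filter_upwards [Iio_mem_nhds hlt] with z hz
        have hz' : z ≤ x := (mem_Iio.mp hz).le
        simp only [RN, ← hs_def, min_eq_right hz', max_eq_left hz']
      rw [hev1.deriv_eq, hev2.deriv_eq]
      rw [(((hdb x).const_mul _).div_const _).deriv,
        (((hdA y).mul_const _).div_const _).deriv]
      ring
  · -- integral identity
    intro ρ d hρ hd hm hp x hx
    obtain ⟨hx1, hx2⟩ := hx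
    have hxm : x ∈ Icc (-1:ℝ) 1 := ⟨hx1.le, hx2.le⟩
    have hρc : ContinuousOn ρ (Icc (-1:ℝ) 1) := fun y hy =>
      (hρ y hy).continuousAt.continuousWithinAt
    have ha : Continuous fun y : ℝ => Real.sinh ((1 + y) / s) := by fun_prop
    have hb : Continuous fun y : ℝ => Real.sinh ((1 - y) / s) := by fun_prop
    have hA : Continuous fun y : ℝ => Real.cosh ((1 + y) / s) := by fun_prop
    have hB : Continuous fun y : ℝ => Real.cosh ((1 - y) / s) := by fun_prop
    have hsub1 : uIcc (-1:ℝ) x ⊆ Icc (-1:ℝ) 1 := by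
      rw [uIcc_of_le hxm.1]; exact Icc_subset_Icc le_rfl hxm.2
    have hsub2 : uIcc x (1:ℝ) ⊆ Icc (-1:ℝ) 1 := by
      rw [uIcc_of_le hxm.2]; exact Icc_subset_Icc hxm.1 le_rfl
    -- F agrees with explicit form on Icc
    have hF : ∀ x' ∈ Icc (-1:ℝ) 1, (∫ y in Icc (-1:ℝ) 1, RD ε x' y * ρ y)
        = (Real.sinh ((1 - x') / s)
            * ∫ y in (-1:ℝ)..x', Real.sinh ((1 + y) / s) * ρ y) / (s * Real.sinh (2 / s))
          + (Real.sinh ((1 + x') / s)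
            * ∫ y in x'..(1:ℝ), Real.sinh ((1 - y) / s) * ρ y) / (s * Real.sinh (2 / s)) := by
      intro x' hx'
      have := split_kernel (fun t => Real.sinh ((1 + t) / s)) (fun t => Real.sinh ((1 - t) / s))
        ρ (s * Real.sinh (2 / s)) ha hb hρc hx'
      simpa only [RD, ← hs_def] using this
    -- RHS agrees with explicit form
    have hG : (∫ y in Icc (-1:ℝ) 1, RN ε x y * d y)
        = (Real.cosh ((1 - x) / s)
            * ∫ y in (-1:ℝ)..x, Real.cosh ((1 + y) / s) * d y) / (s * Real.sinh (2 / s))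
          + (Real.cosh ((1 + x) / s)
            * ∫ y in x..(1:ℝ), Real.cosh ((1 - y) / s) * d y) / (s * Real.sinh (2 / s)) := by
      have := split_kernel (fun t => Real.cosh ((1 + t) / s)) (fun t => Real.cosh ((1 - t) / s))
        d (s * Real.sinh (2 / s)) hA hB hd.continuousOn hxm
      simpa only [RN, ← hs_def] using this
    -- integration by parts on [-1, x]
    have hibp1 : (∫ y in (-1:ℝ)..x, Real.cosh ((1 + y) / s) * d y)
        = Real.cosh ((1 + x) / s) * ρ x
          - (1 / s) * ∫ y in (-1:ℝ)..x, Real.sinh ((1 + y) / s) * ρ y := by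
      have h := intervalIntegral.integral_mul_deriv_eq_deriv_mul
        (u := fun y => Real.cosh ((1 + y) / s)) (v := ρ)
        (u' := fun y => Real.sinh ((1 + y) / s) * (1 / s)) (v' := d)
        (fun y _ => hdA y) (fun y hy => hρ y (hsub1 hy))
        ((ha.mul continuous_const).continuousOn.intervalIntegrable)
        (hd.intervalIntegrable _ _)
      have h2 : (∫ y in (-1:ℝ)..x, Real.sinh ((1 + y) / s) * (1 / s) * ρ y)
          = (1 / s) * ∫ y in (-1:ℝ)..x, Real.sinh ((1 + y) / s) * ρ y := by
        rw [← intervalIntegral.integral_const_mul]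
        congr 1; funext y; ring
      rw [h, h2, hm]
      norm_num
    -- integration by parts on [x, 1]
    have hibp2 : (∫ y in x..(1:ℝ), Real.cosh ((1 - y) / s) * d y)
        = -(Real.cosh ((1 - x) / s) * ρ x)
          + (1 / s) * ∫ y in x..(1:ℝ), Real.sinh ((1 - y) / s) * ρ y := by
      have h := intervalIntegral.integral_mul_deriv_eq_deriv_mul
        (u := fun y => Real.cosh ((1 - y) / s)) (v := ρ)
        (u' := fun y => Real.sinh ((1 - y) / s) * (-1 / s)) (v' := d)
        (fun y _ => hdB y) (fun y hy => hρ y (hsub2 hy))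
        ((hb.mul continuous_const).continuousOn.intervalIntegrable)
        (hd.intervalIntegrable _ _)
      have h2 : (∫ y in x..(1:ℝ), Real.sinh ((1 - y) / s) * (-1 / s) * ρ y)
          = (-1 / s) * ∫ y in x..(1:ℝ), Real.sinh ((1 - y) / s) * ρ y := by
        rw [← intervalIntegral.integral_const_mul]
        congr 1; funext y; ring
      rw [h, h2, hp]
      norm_num
      ring
    -- derivative of the two integral terms
    have hcont1 : ContinuousOn (fun y => Real.sinh ((1 + y) / s) * ρ y) (Ioo (-1:ℝ) 1) :=
      ha.continuousOn.mul (hρc.mono Ioo_subset_Icc_self)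
    have hcont2 : ContinuousOn (fun y => Real.sinh ((1 - y) / s) * ρ y) (Ioo (-1:ℝ) 1) :=
      hb.continuousOn.mul (hρc.mono Ioo_subset_Icc_self)
    have hJ1 : HasDerivAt (fun u => ∫ y in (-1:ℝ)..u, Real.sinh ((1 + y) / s) * ρ y)
        (Real.sinh ((1 + x) / s) * ρ x) x :=
      intervalIntegral.integral_hasDerivAt_right
        ((ha.continuousOn.mul (hρc.mono hsub1)).intervalIntegrable)
        (hcont1.stronglyMeasurableAtFilter isOpen_Ioo x ⟨hx1, hx2⟩)
        ((ha.continuousAt).mul (hρ x hxm).continuousAt)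
    have hJ2 : HasDerivAt (fun u => ∫ y in u..(1:ℝ), Real.sinh ((1 - y) / s) * ρ y)
        (-(Real.sinh ((1 - x) / s) * ρ x)) x :=
      intervalIntegral.integral_hasDerivAt_left
        ((hb.continuousOn.mul (hρc.mono hsub2)).intervalIntegrable)
        (hcont2.stronglyMeasurableAtFilter isOpen_Ioo x ⟨hx1, hx2⟩)
        ((hb.continuousAt).mul (hρ x hxm).continuousAt)
    -- derivative of the explicit form
    have hGder : HasDerivAt (fun x' =>
        (Real.sinh ((1 - x') / s)
            * ∫ y in (-1:ℝ)..x', Real.sinh ((1 + y) / s) * ρ y) / (s * Real.sinh (2 / s))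
          + (Real.sinh ((1 + x') / s)
            * ∫ y in x'..(1:ℝ), Real.sinh ((1 - y) / s) * ρ y) / (s * Real.sinh (2 / s)))
        ((Real.cosh ((1 - x) / s) * (-1 / s)
            * (∫ y in (-1:ℝ)..x, Real.sinh ((1 + y) / s) * ρ y)
          + Real.sinh ((1 - x) / s) * (Real.sinh ((1 + x) / s) * ρ x)) / (s * Real.sinh (2 / s))
          + (Real.cosh ((1 + x) / s) * (1 / s)
              * (∫ y in x..(1:ℝ), Real.sinh ((1 - y) / s) * ρ y)
            + Real.sinh ((1 + x) / s) * -(Real.sinh ((1 - x) / s) * ρ x))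
              / (s * Real.sinh (2 / s))) x :=
      (((hdb x).mul hJ1).div_const _).add (((hda x).mul hJ2).div_const _)
    -- assemble
    have hev : (fun x' => ∫ y in Icc (-1:ℝ) 1, RD ε x' y * ρ y) =ᶠ[nhds x]
        (fun x' =>
          (Real.sinh ((1 - x') / s)
              * ∫ y in (-1:ℝ)..x', Real.sinh ((1 + y) / s) * ρ y) / (s * Real.sinh (2 / s))
            + (Real.sinh ((1 + x') / s)
              * ∫ y in x'..(1:ℝ), Real.sinh ((1 - y) / s) * ρ y) / (s * Real.sinh (2 / s))) := by
      filter_upwards [Ioo_mem_nhds hx1 hx2] with z hz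
      exact hF z (Ioo_subset_Icc_self hz)
    have hval : (∫ y in Icc (-1:ℝ) 1, RN ε x y * d y)
        = (Real.cosh ((1 - x) / s) * (-1 / s)
            * (∫ y in (-1:ℝ)..x, Real.sinh ((1 + y) / s) * ρ y)
          + Real.sinh ((1 - x) / s) * (Real.sinh ((1 + x) / s) * ρ x)) / (s * Real.sinh (2 / s))
          + (Real.cosh ((1 + x) / s) * (1 / s)
              * (∫ y in x..(1:ℝ), Real.sinh ((1 - y) / s) * ρ y)
            + Real.sinh ((1 + x) / s) * -(Real.sinh ((1 - x) / s) * ρ x))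
              / (s * Real.sinh (2 / s)) := by
      rw [hG, hibp1, hibp2]
      ring
    rw [hval]
    exact hGder.congr_of_eventuallyEq hev
end
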